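/- For the error monad transformer, the map λ m. bindET m unitET is a deflation: it is continuous, idempotent, and below the identity. -/

import Mathlib

/-! `R(unitET)` agrees with `ret` except at `⊥`, which it sends to `⊥`. Hence it lies pointwise
below `ret`, and the right unit law with monotonicity of bind in the continuation gives
`bindET m unitET ≤ m`; and `R(k)` absorbs it by strictness and the left unit law, so
associativity gives idempotence. Continuity is continuity of `τ`'s bind. -/

open OmegaCompletePartialOrder

/-- The pre-2025 Mathlib notion `OmegaCompletePartialOrder.Continuous'` (removed since):
`f` is monotone and preserves `ωSup` of chains. -/
def OmegaCompletePartialOrder.Continuous' {α β : Type*} [OmegaCompletePartialOrder α]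
    [OmegaCompletePartialOrder β] (f : α → β) : Prop :=
  ∃ hf : Monotone f, ∀ c : Chain α, f (ωSup c) = ωSup (c.map ⟨f, hf⟩)

universe u

/-- The error type `Error ε α` as a flat domain with bottom, `Err`, and `Ok`. -/
inductive ErrorV (ε α : Type u) : Type u
  | bot : ErrorV ε α
  | err : ε → ErrorV ε α
  | ok : α → ErrorV ε α

/-- Flat order on `ErrorV`. -/
instance {ε α : Type u} : PartialOrder (ErrorV ε α) where
  le x y := x = ErrorV.bot ∨ x = y
  le_refl _ := Or.inr rfl
  le_trans x y z h1 h2 := by rcases h1 with h | h <;> rcases h2 with h' | h' <;> simp_all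
  le_antisymm x y h1 h2 := by rcases h1 with h | h <;> rcases h2 with h' | h' <;> simp_all

instance {ε α : Type u} : OrderBot (ErrorV ε α) where
  bot := ErrorV.bot
  bot_le _ := Or.inl rfl

/-- The strict case analysis `R(k)` used in the definition of `bindET`. -/
def Rfun {T : Type u → Type u}
    [∀ γ, OmegaCompletePartialOrder (T γ)] [∀ γ, OrderBot (T γ)]
    (ret : ∀ {γ : Type u}, γ → T γ)
    {ε α δ : Type u} (k : α → T (ErrorV ε δ)) :
    ErrorV ε α → T (ErrorV ε δ)
  | ErrorV.bot => ⊥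
  | ErrorV.err e => ret (ErrorV.err e)
  | ErrorV.ok a => k a

/-- Bind of the error monad transformer: `bindET m k = m >>=τ R(k)`. -/
def bindET {T : Type u → Type u}
    [∀ γ, OmegaCompletePartialOrder (T γ)] [∀ γ, OrderBot (T γ)]
    (ret : ∀ {γ : Type u}, γ → T γ)
    (bind : ∀ {γ δ : Type u}, T γ → (γ → T δ) → T δ)
    {ε α δ : Type u} (m : T (ErrorV ε α)) (k : α → T (ErrorV ε δ)) :
    T (ErrorV ε δ) :=
  bind m (Rfun ret k)

section ErrorT

variable {T : Type u → Type u} [∀ γ, OmegaCompletePartialOrder (T γ)] [∀ γ, OrderBot (T γ)]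
  (ret : ∀ {γ : Type u}, γ → T γ) (bind : ∀ {γ δ : Type u}, T γ → (γ → T δ) → T δ)
  {ε α δ : Type u}

theorem bind_Rfun_unitET {x : ErrorV ε α} (k : α → T (ErrorV ε δ))
    (hleft : ∀ {γ δ : Type u} (a : γ) (k : γ → T δ), bind (ret a) k = k a)
    (hstrict : ∀ {γ δ : Type u} [PartialOrder γ] [OrderBot γ] (k : γ → T δ),
        k ⊥ = ⊥ → bind (⊥ : T γ) k = ⊥) :
    bind (Rfun ret (fun a => ret (ErrorV.ok a)) x) (Rfun ret k) = Rfun ret k x := by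
  cases x with
  | bot => exact hstrict _ rfl
  | err e => exact hleft _ _
  | ok a => exact hleft _ _

theorem bindET_bindET_unitET (m : T (ErrorV ε α)) (k : α → T (ErrorV ε δ))
    (hleft : ∀ {γ δ : Type u} (a : γ) (k : γ → T δ), bind (ret a) k = k a)
    (hassoc : ∀ {γ δ φ : Type u} (m : T γ) (h : γ → T δ) (k : δ → T φ),
        bind (bind m h) k = bind m fun x => bind (h x) k)
    (hstrict : ∀ {γ δ : Type u} [PartialOrder γ] [OrderBot γ] (k : γ → T δ),
        k ⊥ = ⊥ → bind (⊥ : T γ) k = ⊥) :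
    bindET ret bind (bindET ret bind m fun a => ret (ErrorV.ok a)) k = bindET ret bind m k := by
  simp only [bindET, hassoc, bind_Rfun_unitET ret bind k hleft hstrict]

theorem Rfun_unitET_le (x : ErrorV ε α) :
    Rfun ret (fun a => ret (ErrorV.ok a)) x ≤ ret x := by
  cases x with
  | bot => exact bot_le
  | err e => exact le_rfl
  | ok a => exact le_rfl

theorem bindET_unitET_le (m : T (ErrorV ε α))
    (hright : ∀ {γ : Type u} (m : T γ), bind m ret = m)
    (hmono₂ : ∀ {γ δ : Type u} (m : T γ) (k₁ k₂ : γ → T δ),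
        (∀ x, k₁ x ≤ k₂ x) → bind m k₁ ≤ bind m k₂) :
    bindET ret bind m (fun a => ret (ErrorV.ok a)) ≤ m :=
  calc bind m (Rfun ret fun a => ret (ErrorV.ok a))
      ≤ bind m ret := hmono₂ m _ _ (Rfun_unitET_le ret)
    _ = m := hright m

end ErrorT

/-- For the error monad transformer, `fun m => bindET m unitET` is a deflation:
continuous, idempotent, and below the identity. -/
theorem bindET_unitET_deflation {T : Type u → Type u}
    [∀ γ, OmegaCompletePartialOrder (T γ)] [∀ γ, OrderBot (T γ)]
    (ret : ∀ {γ : Type u}, γ → T γ)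
    (bind : ∀ {γ δ : Type u}, T γ → (γ → T δ) → T δ)
    (hleft : ∀ {γ δ : Type u} (a : γ) (k : γ → T δ), bind (ret a) k = k a)
    (hright : ∀ {γ : Type u} (m : T γ), bind m ret = m)
    (hassoc : ∀ {γ δ φ : Type u} (m : T γ) (h : γ → T δ) (k : δ → T φ),
        bind (bind m h) k = bind m fun x => bind (h x) k)
    (hstrict : ∀ {γ δ : Type u} [PartialOrder γ] [OrderBot γ] (k : γ → T δ),
        k ⊥ = ⊥ → bind (⊥ : T γ) k = ⊥)
    (hcont : ∀ {γ δ : Type u} (k : γ → T δ),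
        OmegaCompletePartialOrder.Continuous' (fun m => bind m k))
    (hmono₂ : ∀ {γ δ : Type u} (m : T γ) (k₁ k₂ : γ → T δ),
        (∀ x, k₁ x ≤ k₂ x) → bind m k₁ ≤ bind m k₂)
    {ε α : Type u} :
    OmegaCompletePartialOrder.Continuous'
      (fun m : T (ErrorV ε α) =>
        bindET (fun {_} a => ret a) (fun {_ _} m k => bind m k) m
          (fun a => ret (ErrorV.ok a))) ∧
    (∀ m : T (ErrorV ε α),
        bindET (fun {_} a => ret a) (fun {_ _} m k => bind m k)
            (bindET (fun {_} a => ret a) (fun {_ _} m k => bind m k) m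
              (fun a => ret (ErrorV.ok a)))
            (fun a => ret (ErrorV.ok a))
          = bindET (fun {_} a => ret a) (fun {_ _} m k => bind m k) m
              (fun a => ret (ErrorV.ok a))) ∧
    (∀ m : T (ErrorV ε α),
        bindET (fun {_} a => ret a) (fun {_ _} m k => bind m k) m
          (fun a => ret (ErrorV.ok a)) ≤ m) := by
  exact ⟨hcont _, fun m => bindET_bindET_unitET ret bind m _ hleft hassoc hstrict,
    fun m => bindET_unitET_le ret bind m hright hmono₂⟩
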